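/- Let G be a group and Δ a subgroup of G contained in the center Z(G) (so Δ is normal in G). If the quotient group G⧸Δ is perfect, then the commutator subgroup [G,G] of G is itself perfect: [[G,G],[G,G]] = [G,G]. -/

import Mathlib

/-! Every element of `G` is `k * z` with `k ∈ [G,G]` and `z ∈ Δ`, because `[G,G]` maps onto
`[G⧸Δ, G⧸Δ] = G⧸Δ`. Since central factors drop out of commutators, `⁅k * z, k' * z'⁆ = ⁅k, k'⁆`,
so every commutator of `G` already lies in `[[G,G],[G,G]]`. -/

open scoped commutatorElement

theorem commutatorElement_mul_left_of_mem_center {G : Type*} [Group G] {z : G}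
    (hz : z ∈ Subgroup.center G) (g h : G) : ⁅g * z, h⁆ = ⁅g, h⁆ := by
  simp [commutatorElement_def, mul_assoc, ← Subgroup.mem_center_iff.mp hz h]

namespace Subgroup

variable {G : Type*} [Group G]

theorem normal_of_le_center {Z : Subgroup G} (hZ : Z ≤ center G) : Z.Normal :=
  ⟨fun z hz g => by rwa [mem_center_iff.mp (hZ hz) g, mul_inv_cancel_right]⟩

theorem commutator_sup_left_of_le_center {H K Z : Subgroup G} (hZ : Z ≤ center G) :
    ⁅H ⊔ Z, K⁆ = ⁅H, K⁆ := by
  have := normal_of_le_center hZ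
  refine le_antisymm (commutator_le.mpr ?_) (commutator_mono le_sup_left le_rfl)
  rintro _ hx k hk
  obtain ⟨h, hh, z, hz, rfl⟩ := mem_sup_of_normal_right.mp hx
  rw [commutatorElement_mul_left_of_mem_center (hZ hz)]
  exact commutator_mem_commutator hh hk

theorem commutator_sup_sup_of_le_center {H K Z : Subgroup G} (hZ : Z ≤ center G) :
    ⁅H ⊔ Z, K ⊔ Z⁆ = ⁅H, K⁆ := by
  rw [commutator_sup_left_of_le_center hZ, commutator_comm, commutator_sup_left_of_le_center hZ,
    commutator_comm]

end Subgroup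

theorem commutator_sup_eq_top_of_commutator_quotient_eq_top {G : Type*} [Group G]
    (N : Subgroup G) [N.Normal] (h : commutator (G ⧸ N) = ⊤) : commutator G ⊔ N = ⊤ := by
  have hmap : (commutator G).map (QuotientGroup.mk' N) = ⊤ := by
    rw [map_commutator_eq, QuotientGroup.range_mk', ← commutator_def, h]
  rw [sup_comm, ← QuotientGroup.comap_map_mk', hmap, Subgroup.comap_top]

/-- If `Δ` is a central subgroup of `G` and `G⧸Δ` is perfect, then the commutator
subgroup `[G,G]` is itself perfect: `[[G,G],[G,G]] = [G,G]`. -/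
theorem central_quotient_perfect_commutator_perfect (G : Type*) [Group G]
    (Δ : Subgroup G) (hle : Δ ≤ Subgroup.center G) [Δ.Normal]
    (hperf : commutator (G ⧸ Δ) = ⊤) :
    ⁅commutator G, commutator G⁆ = commutator G := by
  calc ⁅commutator G, commutator G⁆ = ⁅commutator G ⊔ Δ, commutator G ⊔ Δ⁆ :=
        (Subgroup.commutator_sup_sup_of_le_center hle).symm
    _ = ⁅⊤, ⊤⁆ := by rw [commutator_sup_eq_top_of_commutator_quotient_eq_top Δ hperf]
    _ = commutator G := (commutator_def G).symm
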